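/- Proposition 7(1): Fix π₀ ∈ (0,1) and n ∈ ℕ. For γ > 1 and κ > 1, set p = γ(κ−1)/((γ+1)κ) and q = (κ−1)/((γ+1)κ) (so that p/q = γ and 1/(1−p−q) = κ), α = (1 − √(1−4pq))/2, and W_n(γ, κ) = 1 / (1 + ((1−π₀)/π₀)·((p−α)/(q−α))·γ^{−(n+1)}). Then for every fixed γ > 1, the map κ ↦ W_n(γ, κ) is strictly decreasing on (1, ∞). -/

import Mathlib

/-!
Write `q = (κ - 1) / ((γ + 1) κ)`, so that `p = γ q` and `q` increases with `κ` on `(1, ∞)`.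
Since `α (1 - α) = p q`, one has `α / q = 2 γ q / (1 + √(1 - 4 γ q²))`, which increases with `q`,
and `(p - α) / (q - α) = (γ - α/q) / (1 - α/q)` is increasing in `α / q < 1` because `γ > 1`.
Hence the ratio `(p - α) / (q - α)` grows with `κ`, and `W_n` falls.
-/

/-- The sender's equilibrium value `V_n` reparametrized by the signal
informativeness `γ = p/q` and the expected evidence length `κ = 1/(1−p−q)`,
via `p = γ(κ−1)/((γ+1)κ)`, `q = (κ−1)/((γ+1)κ)`. -/
noncomputable def W (π0 : ℝ) (n : ℕ) (γ κ : ℝ) : ℝ :=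
  let p := γ * (κ - 1) / ((γ + 1) * κ)
  let q := (κ - 1) / ((γ + 1) * κ)
  let α := (1 - Real.sqrt (1 - 4 * p * q)) / 2
  1 / (1 + ((1 - π0) / π0) * ((p - α) / (q - α)) * γ ^ (-(n + 1 : ℤ)))

noncomputable def alpha (p q : ℝ) : ℝ := (1 - √(1 - 4 * p * q)) / 2

lemma alpha_lt_right {p q : ℝ} (hq : 0 < q) (hpq : p + q < 1) : alpha p q < q := by
  have : 1 - 2 * q < √(1 - 4 * p * q) := Real.lt_sqrt_of_sq_lt (by nlinarith)
  unfold alpha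
  linarith

lemma alpha_div_eq {p q : ℝ} (hq : 0 < q) (h : 4 * p * q ≤ 1) :
    alpha p q / q = 2 * p / (1 + √(1 - 4 * p * q)) := by
  have hs : √(1 - 4 * p * q) ^ 2 = 1 - 4 * p * q := Real.sq_sqrt (by linarith)
  have hs0 : 0 ≤ √(1 - 4 * p * q) := Real.sqrt_nonneg _
  unfold alpha
  rw [div_eq_div_iff hq.ne' (by positivity)]
  linear_combination (-1 / 2) * hs

lemma alpha_mul_div_lt_alpha_mul_div {γ q₁ q₂ : ℝ} (hγ : 0 < γ) (hq₁ : 0 < q₁) (h : q₁ < q₂)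
    (hq₂ : 4 * (γ * q₂) * q₂ ≤ 1) :
    alpha (γ * q₁) q₁ / q₁ < alpha (γ * q₂) q₂ / q₂ := by
  have hγq₂ : 0 ≤ γ * q₂ := mul_nonneg hγ.le (hq₁.trans h).le
  have hq₁' : 4 * (γ * q₁) * q₁ ≤ 1 := le_trans (by gcongr) hq₂
  rw [alpha_div_eq hq₁ hq₁', alpha_div_eq (hq₁.trans h) hq₂]
  have hsqrt : √(1 - 4 * (γ * q₂) * q₂) ≤ √(1 - 4 * (γ * q₁) * q₁) :=
    Real.sqrt_le_sqrt (by gcongr)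
  gcongr

lemma sub_div_one_sub_lt_sub_div_one_sub {γ t₁ t₂ : ℝ} (hγ : 1 < γ) (h : t₁ < t₂) (ht₂ : t₂ < 1) :
    (γ - t₁) / (1 - t₁) < (γ - t₂) / (1 - t₂) := by
  rw [div_lt_div_iff₀ (by linarith) (by linarith)]
  nlinarith

lemma mul_sub_div_sub_eq {γ q a : ℝ} (hq : q ≠ 0) :
    (γ * q - a) / (q - a) = (γ - a / q) / (1 - a / q) := by
  rw [← mul_div_mul_right (γ - a / q) (1 - a / q) hq]
  field_simp

noncomputable def likelihoodRatio (γ q : ℝ) : ℝ :=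
  (γ * q - alpha (γ * q) q) / (q - alpha (γ * q) q)

lemma likelihoodRatio_pos {γ q : ℝ} (hγ : 1 ≤ γ) (hq : 0 < q) (hq' : (γ + 1) * q < 1) :
    0 < likelihoodRatio γ q := by
  have hα : alpha (γ * q) q < q := alpha_lt_right hq (by linarith)
  exact div_pos (by nlinarith) (by linarith)

lemma likelihoodRatio_lt_likelihoodRatio {γ q₁ q₂ : ℝ} (hγ : 1 < γ) (hq₁ : 0 < q₁) (h : q₁ < q₂)
    (hq₂ : (γ + 1) * q₂ < 1) :
    likelihoodRatio γ q₁ < likelihoodRatio γ q₂ := by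
  have hq₂0 : 0 < q₂ := hq₁.trans h
  have hα : alpha (γ * q₂) q₂ < q₂ := alpha_lt_right hq₂0 (by linarith)
  rw [likelihoodRatio, likelihoodRatio, mul_sub_div_sub_eq hq₁.ne', mul_sub_div_sub_eq hq₂0.ne']
  refine sub_div_one_sub_lt_sub_div_one_sub hγ ?_ ((div_lt_one hq₂0).2 hα)
  have hsq : ((γ + 1) * q₂) ^ 2 < 1 := pow_lt_one₀ (by positivity) hq₂ two_ne_zero
  exact alpha_mul_div_lt_alpha_mul_div (by linarith) hq₁ h (by nlinarith [sq_nonneg (γ * q₂ - q₂)])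

/-- Proposition 7(1): for every fixed `γ > 1`, the sender's equilibrium value
`W_n(γ, ·)` is strictly decreasing in the expected evidence length `κ` on
`(1, ∞)`. -/
theorem stmt_17 (π0 : ℝ) (h0 : 0 < π0) (h1 : π0 < 1) (n : ℕ) (γ : ℝ) (hγ : 1 < γ) :
    StrictAntiOn (fun κ => W π0 n γ κ) (Set.Ioi (1 : ℝ)) := by
  intro κ₁ hκ₁ κ₂ hκ₂ hκ
  simp only [Set.mem_Ioi] at hκ₁ hκ₂
  set q : ℝ → ℝ := fun κ => (κ - 1) / ((γ + 1) * κ) with hq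
  have hW : ∀ κ, W π0 n γ κ =
      1 / (1 + ((1 - π0) / π0) * likelihoodRatio γ (q κ) * γ ^ (-(n + 1 : ℤ))) := by
    intro κ
    simp only [W, likelihoodRatio, alpha, hq, mul_div_assoc]
  have hq₁ : 0 < q κ₁ := div_pos (by linarith) (by positivity)
  have hq₁₂ : q κ₁ < q κ₂ := by
    rw [hq, div_lt_div_iff₀ (by positivity) (by positivity)]
    nlinarith
  have hq₂ : (γ + 1) * q κ₂ < 1 := by
    rw [hq, mul_div_assoc', div_lt_one (by positivity)]
    nlinarith
  have hR₁ := likelihoodRatio_pos hγ.le hq₁ (by nlinarith)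
  have hc : 0 < (1 - π0) / π0 := div_pos (by linarith) h0
  have hz : 0 < γ ^ (-(n + 1 : ℤ)) := zpow_pos (by linarith) _
  show W π0 n γ κ₂ < W π0 n γ κ₁
  rw [hW, hW]
  gcongr 1 / (1 + _ * ?_ * _)
  exact likelihoodRatio_lt_likelihoodRatio hγ hq₁ hq₁₂ hq₂
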